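/- arXiv:2407.11710 — 3 statements merged into one kernel-verified Lean document; each statement's English description precedes it below -/
import Mathlib

section
/- Let η > 0 and let W : [0,1]² → [0,M] be a piecewise θ-Lipschitz DiKernel with respect to a partition of [0,1] into K intervals. Then there exists n₀ ∈ ℕ such that for every n ≥ n₀ and every interval partition 𝒱 of [0,1] whose cells all have measure at most 1/n, the dynamics fₜ = Tᵗ(W)f₀ and f̃ₜ = Tᵗ(W_𝒱)f₀ satisfy ‖fₜ − f̃ₜ‖₁ ≤ min{2, tη} for all t ∈ ℕ₊ and every initial opinion f₀ with values in [-1,1]. -/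
open MeasureTheory Set

noncomputable def Tk (W : ℝ → ℝ → ℝ) (f : ℝ → ℝ) : ℝ → ℝ :=
  fun x => ∫ y in Icc (0:ℝ) 1, W x y * f y

noncomputable def L1norm (f : ℝ → ℝ) : ℝ :=
  ∫ x in Icc (0:ℝ) 1, |f x|

noncomputable def cutNorm (U : ℝ → ℝ → ℝ) : ℝ :=
  ⨆ p : {p : Set ℝ × Set ℝ // MeasurableSet p.1 ∧ MeasurableSet p.2},
    |∫ x in p.1.1 ∩ Icc (0:ℝ) 1, ∫ y in p.1.2 ∩ Icc (0:ℝ) 1, U x y|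

structure IntervalPartition (n : ℕ) where
  a : ℕ → ℝ
  mono : ∀ i < n, a i < a (i + 1)
  first : a 0 = 0
  last : a n = 1

def IntervalPartition.cell {n : ℕ} (P : IntervalPartition n) (i : Fin n) : Set ℝ :=
  if (i : ℕ) + 1 = n then Icc (P.a i) (P.a ((i : ℕ) + 1))
  else Ico (P.a i) (P.a ((i : ℕ) + 1))

noncomputable def discretize {n : ℕ} (W : ℝ → ℝ → ℝ) (P : IntervalPartition n) : ℝ → ℝ → ℝ :=
  fun x y => ∑ i : Fin n, ∑ j : Fin n,
    (P.cell i).indicator 1 x * (P.cell j).indicator 1 y *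
      ((∫ u in P.cell i, ∫ v in P.cell j, W u v) /
        ((P.a ((i : ℕ) + 1) - P.a i) * (P.a ((j : ℕ) + 1) - P.a j)))

noncomputable def blockKernel {n : ℕ} (P : IntervalPartition n)
    (Wm : Matrix (Fin n) (Fin n) ℝ) : ℝ → ℝ → ℝ :=
  fun x y => ∑ i : Fin n, ∑ j : Fin n,
    (P.cell i).indicator 1 x * (P.cell j).indicator 1 y *
      (Wm i j / (P.a ((j : ℕ) + 1) - P.a j))

noncomputable def blockFun {n : ℕ} (P : IntervalPartition n) (v : Fin n → ℝ) : ℝ → ℝ :=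
  fun x => ∑ i : Fin n, (P.cell i).indicator 1 x * v i

/-!
The error `eₜ = T(W)ᵗ f₀ - T(W_Q)ᵗ f₀` satisfies `eₜ₊₁ = T(W) eₜ + (T(W) - T(W_Q)) gₜ`, where
`gₜ = T(W_Q)ᵗ f₀` again takes values in `[-1,1]`, so the second term is bounded pointwise by the
row distance `D(x) = ‖W(x,·) - W_Q(x,·)‖₁`. Since the rows of `W` integrate to `1`, `T(W)` does
not increase sup norms, and since `W ≤ M` it maps `L¹` to `L^∞` with norm at most `M`. Hence
`|eₜ(x)| ≤ (t-1) M δ + D(x)` with `δ = ‖W - W_Q‖_{L¹([0,1]²)}`, so `‖eₜ‖₁ ≤ t (M+1) δ`: the error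
grows linearly, not geometrically.

It remains to see `δ = O(1/n)`. Outside the `1/n`-neighbourhood of the `K+1` breakpoints of `I`,
every cell of `Q` lies inside a single cell of `I`, so the Lipschitz bound gives `|W - W_Q| ≤ 2θ/n`;
the neighbourhood has measure `O(K/n)` and there `|W - W_Q| ≤ M`.
-/

local notation "𝕀" => Icc (0:ℝ) 1

lemma integrableOn_of_abs_le {α : Type*} [MeasurableSpace α] {μ : Measure α} {s : Set α}
    (hs : MeasurableSet s) (hμs : μ s ≠ ⊤) {g : α → ℝ} (hg : Measurable g) {C : ℝ}
    (hC : ∀ x ∈ s, |g x| ≤ C) : IntegrableOn g s μ :=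
  Measure.integrableOn_of_bounded hμs hg.aestronglyMeasurable (ae_restrict_of_forall_mem hs hC)

lemma integrableOn_unitInterval_of_abs_le {g : ℝ → ℝ} (hg : Measurable g) {C : ℝ}
    (hC : ∀ x ∈ 𝕀, |g x| ≤ C) : IntegrableOn g 𝕀 :=
  integrableOn_of_abs_le measurableSet_Icc (by simp) hg hC

namespace IntervalPartition

lemma pos {n : ℕ} (P : IntervalPartition n) : 0 < n :=
  Nat.pos_of_ne_zero fun hn => by subst hn; exact zero_ne_one (P.first.symm.trans P.last)

variable {n : ℕ} (P : IntervalPartition n)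

lemma strictMonoOn_a : StrictMonoOn P.a (Iic n) :=
  strictMonoOn_Iic_of_lt_succ P.mono

lemma a_le_a {i j : ℕ} (hij : i ≤ j) (hj : j ≤ n) : P.a i ≤ P.a j :=
  P.strictMonoOn_a.monotoneOn (mem_Iic.2 (hij.trans hj)) (mem_Iic.2 hj) hij

lemma a_mem_Icc {i : ℕ} (hi : i ≤ n) : P.a i ∈ 𝕀 :=
  ⟨P.first ▸ P.a_le_a i.zero_le hi, P.last ▸ P.a_le_a hi le_rfl⟩

lemma cell_subset_Icc (i : Fin n) : P.cell i ⊆ Icc (P.a i) (P.a (i + 1)) := by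
  unfold cell; split_ifs
  exacts [subset_rfl, Ico_subset_Icc_self]

lemma Ico_subset_cell (i : Fin n) : Ico (P.a i) (P.a (i + 1)) ⊆ P.cell i := by
  unfold cell; split_ifs
  exacts [Ico_subset_Icc_self, subset_rfl]

lemma cell_subset_unitInterval (i : Fin n) : P.cell i ⊆ 𝕀 :=
  (P.cell_subset_Icc i).trans (Icc_subset_Icc (P.a_mem_Icc i.is_le').1 (P.a_mem_Icc i.isLt).2)

lemma measurableSet_cell (i : Fin n) : MeasurableSet (P.cell i) := by
  unfold cell; split_ifs
  exacts [measurableSet_Icc, measurableSet_Ico]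

lemma volume_cell (i : Fin n) : volume (P.cell i) = ENNReal.ofReal (P.a (i + 1) - P.a i) := by
  unfold cell; split_ifs
  exacts [Real.volume_Icc, Real.volume_Ico]

lemma volume_cell_ne_top (i : Fin n) : volume (P.cell i) ≠ ⊤ := by
  simp [P.volume_cell]

lemma volume_real_cell (i : Fin n) : volume.real (P.cell i) = P.a (i + 1) - P.a i := by
  rw [measureReal_def, P.volume_cell, ENNReal.toReal_ofReal (sub_pos.2 (P.mono i i.isLt)).le]

lemma volume_real_cell_pos (i : Fin n) : 0 < volume.real (P.cell i) := by
  rw [P.volume_real_cell]; exact sub_pos.2 (P.mono i i.isLt)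

lemma cell_eq_Ico {i : Fin n} (hi : (i : ℕ) + 1 ≠ n) : P.cell i = Ico (P.a i) (P.a (i + 1)) :=
  if_neg hi

lemma pairwise_disjoint_cell : Pairwise (Function.onFun Disjoint P.cell) := by
  suffices h : ∀ i j : Fin n, i < j → Disjoint (P.cell i) (P.cell j) from
    fun i j hij => hij.lt_or_gt.elim (h i j) fun hji => (h j i hji).symm
  intro i j hij
  rw [P.cell_eq_Ico (by omega : (i : ℕ) + 1 ≠ n)]
  refine Set.disjoint_left.2 fun z hzi hzj => ?_
  have : P.a (i + 1) ≤ P.a j := P.a_le_a (by omega) j.is_le'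
  linarith [hzi.2, (P.cell_subset_Icc j hzj).1]

lemma eq_of_mem_cell {x : ℝ} {i j : Fin n} (hi : x ∈ P.cell i) (hj : x ∈ P.cell j) : i = j :=
  by_contra fun h => Set.disjoint_left.1 (P.pairwise_disjoint_cell h) hi hj

lemma exists_mem_cell {x : ℝ} (hx : x ∈ 𝕀) : ∃ i : Fin n, x ∈ P.cell i := by
  classical
  set i := Nat.findGreatest (fun m => P.a m ≤ x) (n - 1)
  have hi : i ≤ n - 1 := Nat.findGreatest_le _
  have hai : P.a i ≤ x :=
    Nat.findGreatest_spec (P := fun m => P.a m ≤ x) (Nat.zero_le _) (P.first ▸ hx.1)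
  have hP := P.pos
  refine ⟨⟨i, by omega⟩, ?_⟩
  by_cases hlast : i + 1 = n
  · rw [cell, if_pos hlast]
    exact ⟨hai, by simpa [hlast, P.last] using hx.2⟩
  · refine P.Ico_subset_cell _ ⟨hai, not_le.1 fun h => ?_⟩
    exact Nat.findGreatest_is_greatest (lt_add_one i) (by omega) h

lemma iUnion_cell : ⋃ i, P.cell i = 𝕀 :=
  (iUnion_subset P.cell_subset_unitInterval).antisymm fun _ hx =>
    mem_iUnion.2 (P.exists_mem_cell hx)

lemma exists_a_mem_uIcc {k : Fin n} {x u : ℝ} (hx : x ∈ P.cell k)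
    (huk : u ∉ P.cell k) : ∃ j ≤ n, P.a j ∈ uIcc x u := by
  have hxk := P.cell_subset_Icc k hx
  rcases lt_or_ge u (P.a k) with hlt | hge
  · exact ⟨k, k.is_le', mem_uIcc.2 (Or.inr ⟨hlt.le, hxk.1⟩)⟩
  · refine ⟨k + 1, k.isLt, mem_uIcc.2 (Or.inl ⟨hxk.2, ?_⟩)⟩
    by_contra! hlt
    exact huk (P.Ico_subset_cell k ⟨hge, hlt⟩)

lemma sum_indicator_mul {x : ℝ} {i : Fin n} (hx : x ∈ P.cell i) (c : Fin n → ℝ) :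
    ∑ j, (P.cell j).indicator 1 x * c j = c i := by
  rw [Fintype.sum_eq_single i fun j hj => by
    rw [indicator_of_notMem fun hxj => hj (P.eq_of_mem_cell hxj hx), zero_mul]]
  rw [indicator_of_mem hx, Pi.one_apply, one_mul]

lemma integral_unitInterval_eq_sum {g : ℝ → ℝ} (hg : IntegrableOn g 𝕀) :
    ∫ x in 𝕀, g x = ∑ i, ∫ x in P.cell i, g x := by
  rw [← P.iUnion_cell] at hg ⊢
  rw [integral_iUnion P.measurableSet_cell P.pairwise_disjoint_cell hg, tsum_fintype]

def breakpointNbhd (h : ℝ) : Set ℝ :=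
  ⋃ j ∈ Finset.range (n + 1), Icc (P.a j - h) (P.a j + h)

lemma measurableSet_breakpointNbhd (h : ℝ) : MeasurableSet (P.breakpointNbhd h) :=
  Finset.measurableSet_biUnion _ fun _ _ => measurableSet_Icc

lemma volume_real_breakpointNbhd_le {h : ℝ} (hh : 0 ≤ h) :
    volume.real (P.breakpointNbhd h) ≤ 2 * (n + 1) * h := by
  calc volume.real (P.breakpointNbhd h)
      ≤ ∑ j ∈ Finset.range (n + 1), volume.real (Icc (P.a j - h) (P.a j + h)) :=
        measureReal_biUnion_finset_le _ _
    _ = ∑ j ∈ Finset.range (n + 1), 2 * h := Finset.sum_congr rfl fun j _ => by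
        rw [Real.volume_real_Icc_of_le (by linarith)]; ring
    _ = 2 * (n + 1) * h := by
        rw [Finset.sum_const, Finset.card_range, nsmul_eq_mul]
        push_cast
        ring

lemma volume_breakpointNbhd_ne_top (h : ℝ) : volume (P.breakpointNbhd h) ≠ ⊤ :=
  ((measure_biUnion_finset_le _ _).trans_lt
    (ENNReal.sum_lt_top.2 fun _ _ => measure_Icc_lt_top)).ne

lemma mem_cell_of_notMem_breakpointNbhd {h : ℝ} {k : Fin n} {x u : ℝ} (hx : x ∈ P.cell k)
    (hxN : x ∉ P.breakpointNbhd h) (hu : |u - x| ≤ h) : u ∈ P.cell k := by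
  by_contra huk
  obtain ⟨j, hj, hju⟩ := P.exists_a_mem_uIcc hx huk
  have hdist := (abs_sub_left_of_mem_uIcc hju).trans hu
  exact hxN (mem_biUnion (Finset.mem_range.2 (Nat.lt_succ_of_le hj))
    ⟨by linarith [(abs_le.1 hdist).2], by linarith [(abs_le.1 hdist).1]⟩)

lemma pos_of_forall_sub_le {h : ℝ} (hmesh : ∀ j < n, P.a (j + 1) - P.a j ≤ h) : 0 < h :=
  (sub_pos.2 (P.mono 0 P.pos)).trans_le (hmesh 0 P.pos)

lemma abs_sub_le_of_mem_cell {h : ℝ} (hmesh : ∀ j < n, P.a (j + 1) - P.a j ≤ h) {i : Fin n}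
    {z w : ℝ} (hz : z ∈ P.cell i) (hw : w ∈ P.cell i) : |z - w| ≤ h := by
  have hz' := P.cell_subset_Icc i hz
  have hw' := P.cell_subset_Icc i hw
  have := hmesh i i.isLt
  exact abs_sub_le_iff.2 ⟨by linarith [hz'.2, hw'.1], by linarith [hz'.1, hw'.2]⟩

end IntervalPartition

structure IsRowStochastic (M : ℝ) (W : ℝ → ℝ → ℝ) : Prop where
  measurable : Measurable (Function.uncurry W)
  mem_Icc : ∀ x ∈ 𝕀, ∀ y ∈ 𝕀, W x y ∈ Icc 0 M
  integral_eq_one : ∀ x ∈ 𝕀, ∫ y in 𝕀, W x y = 1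

structure IsOpinion (f : ℝ → ℝ) : Prop where
  measurable : Measurable f
  abs_le_one : ∀ x ∈ 𝕀, |f x| ≤ 1

lemma L1norm_sub_le_two {f g : ℝ → ℝ} (hf : IsOpinion f) (hg : IsOpinion g) :
    L1norm (fun x => f x - g x) ≤ 2 := by
  have h : ∀ x ∈ 𝕀, |f x - g x| ≤ 2 := fun x hx =>
    (abs_sub _ _).trans (by linarith [hf.abs_le_one x hx, hg.abs_le_one x hx])
  calc L1norm (fun x => f x - g x) ≤ ∫ _ in 𝕀, (2 : ℝ) :=
        integral_mono_of_nonneg (ae_of_all _ fun _ => abs_nonneg _) (integrable_const _)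
          (ae_restrict_of_forall_mem measurableSet_Icc h)
    _ = 2 := by simp

noncomputable def rowDist (W W' : ℝ → ℝ → ℝ) (x : ℝ) : ℝ :=
  L1norm (fun y => W x y - W' x y)

lemma rowDist_nonneg (W W' : ℝ → ℝ → ℝ) (x : ℝ) : 0 ≤ rowDist W W' x :=
  setIntegral_nonneg measurableSet_Icc fun _ _ => abs_nonneg _

namespace IsRowStochastic

variable {M M' : ℝ} {W W' : ℝ → ℝ → ℝ}

lemma bound_nonneg (hW : IsRowStochastic M W) : 0 ≤ M :=
  (hW.mem_Icc 0 (by simp) 0 (by simp)).1.trans (hW.mem_Icc 0 (by simp) 0 (by simp)).2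

lemma integrableOn_mul (hW : IsRowStochastic M W) {x : ℝ} (hx : x ∈ 𝕀) {g : ℝ → ℝ}
    (hg : Measurable g) {C : ℝ} (hC : ∀ y ∈ 𝕀, |g y| ≤ C) :
    IntegrableOn (fun y => W x y * g y) 𝕀 := by
  refine integrableOn_unitInterval_of_abs_le
    ((hW.measurable.comp measurable_prodMk_left).mul hg) (C := M * C) fun y hy => ?_
  obtain ⟨h0, hM⟩ := hW.mem_Icc x hx y hy
  rw [abs_mul, abs_of_nonneg h0]
  exact mul_le_mul hM (hC y hy) (abs_nonneg _) hW.bound_nonneg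

lemma integrableOn_section (hW : IsRowStochastic M W) {x : ℝ} (hx : x ∈ 𝕀) :
    IntegrableOn (W x) 𝕀 := by
  simpa using hW.integrableOn_mul hx (g := fun _ => 1) measurable_const (C := 1) (by simp)

lemma measurable_Tk (hW : IsRowStochastic M W) {f : ℝ → ℝ} (hf : Measurable f) :
    Measurable (Tk W f) :=
  (hW.measurable.mul (hf.comp measurable_snd)).stronglyMeasurable.integral_prod_right'.measurable

lemma Tk_sub_Tk (hW : IsRowStochastic M W) {f g : ℝ → ℝ} (hf : IsOpinion f) (hg : IsOpinion g)
    {x : ℝ} (hx : x ∈ 𝕀) : Tk W f x - Tk W g x = Tk W (fun y => f y - g y) x := by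
  rw [Tk, Tk, Tk, ← integral_sub (hW.integrableOn_mul hx hf.measurable hf.abs_le_one)
    (hW.integrableOn_mul hx hg.measurable hg.abs_le_one)]
  simp only [mul_sub]

lemma abs_Tk_le (hW : IsRowStochastic M W) {x : ℝ} (hx : x ∈ 𝕀) {e g : ℝ → ℝ} {c : ℝ}
    (hg : IntegrableOn g 𝕀) (hg0 : ∀ y ∈ 𝕀, 0 ≤ g y) (he : ∀ y ∈ 𝕀, |e y| ≤ c + g y) :
    |Tk W e x| ≤ c + M * ∫ y in 𝕀, g y := by
  have hbound : ∀ y ∈ 𝕀, ‖W x y * e y‖ ≤ c * W x y + M * g y := fun y hy => by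
    obtain ⟨h0, hM⟩ := hW.mem_Icc x hx y hy
    rw [Real.norm_eq_abs, abs_mul, abs_of_nonneg h0]
    nlinarith [mul_le_mul_of_nonneg_left (he y hy) h0, mul_le_mul_of_nonneg_right hM (hg0 y hy)]
  calc |Tk W e x| ≤ ∫ y in 𝕀, (c * W x y + M * g y) :=
        norm_integral_le_of_norm_le (((hW.integrableOn_section hx).const_mul c).add
          (hg.const_mul M)) (ae_restrict_of_forall_mem measurableSet_Icc hbound)
    _ = c + M * ∫ y in 𝕀, g y := by
        rw [integral_add ((hW.integrableOn_section hx).const_mul c) (hg.const_mul M),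
          integral_const_mul, integral_const_mul, hW.integral_eq_one x hx, mul_one]

lemma opinion_Tk (hW : IsRowStochastic M W) {f : ℝ → ℝ} (hf : IsOpinion f) :
    IsOpinion (Tk W f) where
  measurable := hW.measurable_Tk hf.measurable
  abs_le_one x hx := by
    simpa using hW.abs_Tk_le hx integrableOn_zero (fun _ _ => le_rfl)
      (fun y hy => by simpa using hf.abs_le_one y hy)

lemma opinion_iterate_Tk (hW : IsRowStochastic M W) {f : ℝ → ℝ} (hf : IsOpinion f) (t : ℕ) :
    IsOpinion ((Tk W)^[t] f) := by
  induction t with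
  | zero => exact hf
  | succ t ih => rw [Function.iterate_succ_apply']; exact hW.opinion_Tk ih

lemma abs_sub_le (hW : IsRowStochastic M W) (hW' : IsRowStochastic M' W') {x y : ℝ}
    (hx : x ∈ 𝕀) (hy : y ∈ 𝕀) : |W x y - W' x y| ≤ M + M' := by
  have h := hW.mem_Icc x hx y hy
  have h' := hW'.mem_Icc x hx y hy
  exact abs_sub_le_iff.2 ⟨by linarith [h.1, h.2, h'.1, h'.2], by linarith [h.1, h.2, h'.1, h'.2]⟩

lemma integrableOn_rowDist (hW : IsRowStochastic M W) (hW' : IsRowStochastic M' W') :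
    IntegrableOn (rowDist W W') 𝕀 := by
  have hmeas : Measurable fun p : ℝ × ℝ => |W p.1 p.2 - W' p.1 p.2| :=
    (hW.measurable.sub hW'.measurable).abs
  refine integrableOn_unitInterval_of_abs_le
    hmeas.stronglyMeasurable.integral_prod_right'.measurable (C := M + M') fun x hx => ?_
  have := norm_setIntegral_le_of_norm_le_const (μ := volume) (s := 𝕀)
    (f := fun y => |W x y - W' x y|) measure_Icc_lt_top fun y hy =>
      (abs_abs (W x y - W' x y)).trans_le (hW.abs_sub_le hW' hx hy)
  simpa [rowDist, L1norm] using this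

lemma abs_Tk_sub_Tk_le (hW : IsRowStochastic M W) (hW' : IsRowStochastic M' W') {g : ℝ → ℝ}
    (hg : IsOpinion g) {x : ℝ} (hx : x ∈ 𝕀) : |Tk W g x - Tk W' g x| ≤ rowDist W W' x := by
  rw [Tk, Tk, ← integral_sub (hW.integrableOn_mul hx hg.measurable hg.abs_le_one)
    (hW'.integrableOn_mul hx hg.measurable hg.abs_le_one), ← Real.norm_eq_abs, rowDist, L1norm]
  refine norm_integral_le_of_norm_le (integrableOn_unitInterval_of_abs_le
    (g := fun y => |W x y - W' x y|)
    (((hW.measurable.sub hW'.measurable).comp measurable_prodMk_left).abs) (C := M + M')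
    fun y hy => (abs_abs _).trans_le (hW.abs_sub_le hW' hx hy))
    (ae_restrict_of_forall_mem measurableSet_Icc fun y hy => ?_)
  rw [Real.norm_eq_abs, ← sub_mul, abs_mul]
  exact mul_le_of_le_one_right (abs_nonneg _) (hg.abs_le_one y hy)

end IsRowStochastic

section Dynamics

variable {M M' : ℝ} {W W' : ℝ → ℝ → ℝ}

lemma abs_iterate_Tk_sub_le (hW : IsRowStochastic M W) (hW' : IsRowStochastic M' W')
    {f : ℝ → ℝ} (hf : IsOpinion f) (t : ℕ) {x : ℝ} (hx : x ∈ 𝕀) :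
    |(Tk W)^[t + 1] f x - (Tk W')^[t + 1] f x| ≤
      t * M * (∫ y in 𝕀, rowDist W W' y) + rowDist W W' x := by
  induction t generalizing x with
  | zero => simpa using hW.abs_Tk_sub_Tk_le hW' hf hx
  | succ t ih =>
    rw [Function.iterate_succ_apply' (Tk W) (t + 1), Function.iterate_succ_apply' (Tk W') (t + 1)]
    set F := (Tk W)^[t + 1] f
    set G := (Tk W')^[t + 1] f
    have hF := hW.opinion_iterate_Tk hf (t + 1)
    have hG := hW'.opinion_iterate_Tk hf (t + 1)
    have hprop : |Tk W (fun y => F y - G y) x| ≤ t * M * (∫ y in 𝕀, rowDist W W' y) +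
        M * ∫ y in 𝕀, rowDist W W' y :=
      hW.abs_Tk_le hx (hW.integrableOn_rowDist hW') (fun y _ => rowDist_nonneg W W' y)
        fun y hy => ih hy
    have hstep := hW.abs_Tk_sub_Tk_le hW' hG hx
    rw [show Tk W F x - Tk W' G x = Tk W (fun y => F y - G y) x + (Tk W G x - Tk W' G x) by
        rw [← hW.Tk_sub_Tk hF hG hx]; ring]
    push_cast
    linarith [abs_add_le (Tk W (fun y => F y - G y) x) (Tk W G x - Tk W' G x)]

lemma L1norm_iterate_Tk_sub_le (hW : IsRowStochastic M W) (hW' : IsRowStochastic M' W')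
    {f : ℝ → ℝ} (hf : IsOpinion f) (t : ℕ) :
    L1norm (fun x => (Tk W)^[t + 1] f x - (Tk W')^[t + 1] f x) ≤
      (t * M + 1) * ∫ x in 𝕀, rowDist W W' x := by
  have hD := hW.integrableOn_rowDist hW'
  calc L1norm (fun x => (Tk W)^[t + 1] f x - (Tk W')^[t + 1] f x)
      ≤ ∫ x in 𝕀, (t * M * (∫ y in 𝕀, rowDist W W' y) + rowDist W W' x) :=
        integral_mono_of_nonneg (ae_of_all _ fun _ => abs_nonneg _)
          ((integrable_const _).add hD)
          (ae_restrict_of_forall_mem measurableSet_Icc fun x hx =>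
            abs_iterate_Tk_sub_le hW hW' hf t hx)
    _ = (t * M + 1) * ∫ x in 𝕀, rowDist W W' x := by
        rw [integral_add (integrable_const _) hD]
        simp only [integral_const, measureReal_restrict_apply_univ, Real.volume_real_Icc_of_le
          zero_le_one, sub_zero, one_smul]
        ring

end Dynamics

noncomputable def blockAverage (W : ℝ → ℝ → ℝ) (A B : Set ℝ) : ℝ :=
  (∫ u in A, ∫ v in B, W u v) / (volume.real A * volume.real B)

section Discretize

variable {M : ℝ} {W : ℝ → ℝ → ℝ} {A B : Set ℝ}

lemma volume_prod_ne_top (hA : volume A ≠ ⊤) (hB : volume B ≠ ⊤) : volume (A ×ˢ B) ≠ ⊤ := by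
  rw [Measure.volume_eq_prod, Measure.prod_prod]
  exact ENNReal.mul_ne_top hA hB

lemma integrableOn_prod_of_mem_Icc (hW : Measurable (Function.uncurry W))
    (hA : MeasurableSet A) (hB : MeasurableSet B) (hAfin : volume A ≠ ⊤) (hBfin : volume B ≠ ⊤)
    {a b : ℝ} (h : ∀ u ∈ A, ∀ v ∈ B, W u v ∈ Icc a b) :
    IntegrableOn (Function.uncurry W) (A ×ˢ B) := by
  refine integrableOn_of_abs_le (hA.prod hB) (volume_prod_ne_top hAfin hBfin) hW (C := |a| + |b|)
    fun z hz => ?_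
  obtain ⟨ha, hb⟩ := h z.1 hz.1 z.2 hz.2
  show |W z.1 z.2| ≤ _
  exact abs_le.2 ⟨by linarith [neg_abs_le a, abs_nonneg b],
    by linarith [le_abs_self b, abs_nonneg a]⟩

lemma blockAverage_mem_Icc (hW : Measurable (Function.uncurry W))
    (hA : MeasurableSet A) (hB : MeasurableSet B)
    (hA0 : 0 < volume.real A) (hB0 : 0 < volume.real B)
    {a b : ℝ} (h : ∀ u ∈ A, ∀ v ∈ B, W u v ∈ Icc a b) : blockAverage W A B ∈ Icc a b := by
  have hAfin := (ENNReal.toReal_pos_iff.1 hA0).2.ne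
  have hBfin := (ENNReal.toReal_pos_iff.1 hB0).2.ne
  have hfin := volume_prod_ne_top hAfin hBfin
  have hint := integrableOn_prod_of_mem_Icc hW hA hB hAfin hBfin h
  have hvol : volume.real (A ×ˢ B) = volume.real A * volume.real B := by
    rw [Measure.volume_eq_prod, measureReal_prod_prod]
  have hlow : ∫ _ in A ×ˢ B, a ≤ ∫ z in A ×ˢ B, Function.uncurry W z :=
    setIntegral_mono_on (integrableOn_const hfin) hint (hA.prod hB) fun z hz =>
      (h z.1 hz.1 z.2 hz.2).1
  have hupp : ∫ z in A ×ˢ B, Function.uncurry W z ≤ ∫ _ in A ×ˢ B, b :=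
    setIntegral_mono_on hint (integrableOn_const hfin) (hA.prod hB) fun z hz =>
      (h z.1 hz.1 z.2 hz.2).2
  have hfubini : ∫ z in A ×ˢ B, Function.uncurry W z = ∫ u in A, ∫ v in B, W u v :=
    setIntegral_prod _ hint
  rw [setIntegral_const, hvol, smul_eq_mul, hfubini] at hlow hupp
  rw [blockAverage]
  exact ⟨(le_div_iff₀ (mul_pos hA0 hB0)).2 (by linarith),
    (div_le_iff₀ (mul_pos hA0 hB0)).2 (by linarith)⟩

lemma discretize_apply_of_mem (W : ℝ → ℝ → ℝ) {n : ℕ} (P : IntervalPartition n) {x y : ℝ}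
    {i j : Fin n} (hx : x ∈ P.cell i) (hy : y ∈ P.cell j) :
    discretize W P x y = blockAverage W (P.cell i) (P.cell j) := by
  simp only [discretize, mul_assoc, ← Finset.mul_sum]
  rw [P.sum_indicator_mul hx, P.sum_indicator_mul hy, blockAverage, P.volume_real_cell,
    P.volume_real_cell]

lemma measurable_discretize (W : ℝ → ℝ → ℝ) {n : ℕ} (P : IntervalPartition n) :
    Measurable (Function.uncurry (discretize W P)) := by
  unfold discretize Function.uncurry
  refine Finset.measurable_sum _ fun i _ => Finset.measurable_sum _ fun j _ => ?_
  exact (((measurable_one.indicator (P.measurableSet_cell i)).comp measurable_fst).mul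
    ((measurable_one.indicator (P.measurableSet_cell j)).comp measurable_snd)).mul
    measurable_const

namespace IsRowStochastic

lemma discretize_mem_Icc (hW : IsRowStochastic M W) {n : ℕ} (P : IntervalPartition n) :
    ∀ x ∈ 𝕀, ∀ y ∈ 𝕀, discretize W P x y ∈ Icc 0 M := by
  intro x hx y hy
  obtain ⟨i, hi⟩ := P.exists_mem_cell hx
  obtain ⟨j, hj⟩ := P.exists_mem_cell hy
  rw [discretize_apply_of_mem W P hi hj]
  exact blockAverage_mem_Icc hW.measurable (P.measurableSet_cell i) (P.measurableSet_cell j)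
    (P.volume_real_cell_pos i) (P.volume_real_cell_pos j) fun u hu v hv =>
      hW.mem_Icc u (P.cell_subset_unitInterval i hu) v (P.cell_subset_unitInterval j hv)

lemma integral_discretize_eq_one (hW : IsRowStochastic M W) {n : ℕ} (P : IntervalPartition n)
    {x : ℝ} (hx : x ∈ 𝕀) : ∫ y in 𝕀, discretize W P x y = 1 := by
  obtain ⟨i, hi⟩ := P.exists_mem_cell hx
  have hvol_pos := P.volume_real_cell_pos
  have hcell : ∀ j, ∫ y in P.cell j, discretize W P x y =
      (∫ u in P.cell i, ∫ v in P.cell j, W u v) / volume.real (P.cell i) := fun j => by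
    rw [setIntegral_congr_fun (P.measurableSet_cell j) fun y hy =>
      discretize_apply_of_mem W P hi hy, setIntegral_const, blockAverage, smul_eq_mul]
    field_simp [(hvol_pos i).ne', (hvol_pos j).ne']
  have hinner : ∀ j, IntegrableOn (fun u => ∫ v in P.cell j, W u v) (P.cell i) := fun j => by
    have h := integrableOn_prod_of_mem_Icc hW.measurable (P.measurableSet_cell i)
      (P.measurableSet_cell j) (P.volume_cell_ne_top i) (P.volume_cell_ne_top j) fun u hu v hv =>
        hW.mem_Icc u (P.cell_subset_unitInterval i hu) v (P.cell_subset_unitInterval j hv)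
    rw [IntegrableOn, Measure.volume_eq_prod, ← Measure.prod_restrict] at h
    exact h.integral_prod_left
  have hrow : ∀ u ∈ P.cell i, ∑ j, ∫ v in P.cell j, W u v = 1 := fun u hu => by
    have hu := P.cell_subset_unitInterval i hu
    rw [← P.integral_unitInterval_eq_sum (hW.integrableOn_section hu), hW.integral_eq_one u hu]
  have hsection : IntegrableOn (discretize W P x) 𝕀 :=
    integrableOn_unitInterval_of_abs_le (measurable_discretize W P).of_uncurry_left (C := M)
      fun y hy =>
        abs_le.2 ⟨by linarith [(hW.discretize_mem_Icc P x hx y hy).1, hW.bound_nonneg],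
          (hW.discretize_mem_Icc P x hx y hy).2⟩
  rw [P.integral_unitInterval_eq_sum hsection, Finset.sum_congr rfl fun j _ => hcell j,
    ← Finset.sum_div, ← integral_finsetSum _ fun j _ => hinner j,
    setIntegral_congr_fun (P.measurableSet_cell i) hrow, setIntegral_const, smul_eq_mul, mul_one,
    div_self (hvol_pos i).ne']

lemma discretize (hW : IsRowStochastic M W) {n : ℕ} (P : IntervalPartition n) :
    IsRowStochastic M (discretize W P) where
  measurable := measurable_discretize W P
  mem_Icc := hW.discretize_mem_Icc P
  integral_eq_one _ hx := hW.integral_discretize_eq_one P hx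

end IsRowStochastic

end Discretize

def IsPiecewiseLipschitz {K : ℕ} (I : IntervalPartition K) (θ : ℝ) (W : ℝ → ℝ → ℝ) : Prop :=
  ∀ k₁ k₂ : Fin K, ∀ x ∈ I.cell k₁, ∀ x' ∈ I.cell k₁, ∀ y ∈ I.cell k₂, ∀ y' ∈ I.cell k₂,
    |W x y - W x' y'| ≤ θ * (|x - x'| + |y - y'|)

lemma IsPiecewiseLipschitz.nonneg {K : ℕ} {I : IntervalPartition K} {θ : ℝ}
    {W : ℝ → ℝ → ℝ} (hLip : IsPiecewiseLipschitz I θ W) : 0 ≤ θ := by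
  have ha : 0 < I.a 1 := by simpa [I.first] using I.mono 0 I.pos
  have hmem : ∀ x ∈ Ico 0 (I.a 1), x ∈ I.cell ⟨0, I.pos⟩ := fun x hx =>
    I.Ico_subset_cell _ (by simpa [I.first] using hx)
  have h0 := hmem 0 ⟨le_rfl, ha⟩
  have h := hLip _ _ (I.a 1 / 2) (hmem _ ⟨by positivity, by linarith⟩) 0 h0 0 h0 0 h0
  have h2 := (abs_nonneg _).trans h
  rw [sub_zero, sub_zero, abs_zero, add_zero, abs_of_pos (half_pos ha)] at h2
  exact nonneg_of_mul_nonneg_left h2 (half_pos ha)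

section Lipschitz

variable {M θ h : ℝ} {W : ℝ → ℝ → ℝ} {K J : ℕ} {I : IntervalPartition K}
  {Q : IntervalPartition J}

lemma abs_sub_discretize_le_of_notMem (hW : IsRowStochastic M W)
    (hLip : IsPiecewiseLipschitz I θ W) (hmesh : ∀ j < J, Q.a (j + 1) - Q.a j ≤ h) {x y : ℝ}
    (hx : x ∈ 𝕀) (hy : y ∈ 𝕀) (hxN : x ∉ I.breakpointNbhd h) (hyN : y ∉ I.breakpointNbhd h) :
    |W x y - discretize W Q x y| ≤ 2 * θ * h := by
  obtain ⟨i, hi⟩ := Q.exists_mem_cell hx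
  obtain ⟨j, hj⟩ := Q.exists_mem_cell hy
  obtain ⟨k₁, hk₁⟩ := I.exists_mem_cell hx
  obtain ⟨k₂, hk₂⟩ := I.exists_mem_cell hy
  have hbd := blockAverage_mem_Icc hW.measurable (Q.measurableSet_cell i) (Q.measurableSet_cell j)
    (Q.volume_real_cell_pos i) (Q.volume_real_cell_pos j)
    (a := W x y - 2 * θ * h) (b := W x y + 2 * θ * h) fun u hu v hv => by
      have hux := Q.abs_sub_le_of_mem_cell hmesh hu hi
      have hvy := Q.abs_sub_le_of_mem_cell hmesh hv hj
      have hL := hLip k₁ k₂ u (I.mem_cell_of_notMem_breakpointNbhd hk₁ hxN hux) x hk₁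
        v (I.mem_cell_of_notMem_breakpointNbhd hk₂ hyN hvy) y hk₂
      have hθ : θ * (|u - x| + |v - y|) ≤ θ * (h + h) :=
        mul_le_mul_of_nonneg_left (add_le_add hux hvy) hLip.nonneg
      exact ⟨by linarith [neg_abs_le (W u v - W x y)], by linarith [le_abs_self (W u v - W x y)]⟩
  rw [discretize_apply_of_mem W Q hi hj]
  exact abs_sub_le_iff.2 ⟨by linarith [hbd.1], by linarith [hbd.2]⟩

lemma abs_sub_discretize_le (hW : IsRowStochastic M W) (hLip : IsPiecewiseLipschitz I θ W)
    (hmesh : ∀ j < J, Q.a (j + 1) - Q.a j ≤ h) {x y : ℝ} (hx : x ∈ 𝕀) (hy : y ∈ 𝕀) :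
    |W x y - discretize W Q x y| ≤ 2 * θ * h +
      M * ((I.breakpointNbhd h).indicator 1 x + (I.breakpointNbhd h).indicator 1 y) := by
  set N := I.breakpointNbhd h
  by_cases hbad : x ∈ N ∨ y ∈ N
  · have h0 : ∀ z, 0 ≤ N.indicator (1 : ℝ → ℝ) z := fun z =>
      indicator_nonneg (fun _ _ => zero_le_one) z
    have hind : 1 ≤ N.indicator (1 : ℝ → ℝ) x + N.indicator 1 y := by
      rcases hbad with hb | hb
      · rw [indicator_of_mem hb, Pi.one_apply]; linarith [h0 y]
      · rw [indicator_of_mem hb, Pi.one_apply]; linarith [h0 x]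
    have hW' := hW.discretize_mem_Icc Q x hx y hy
    have hWxy := hW.mem_Icc x hx y hy
    calc |W x y - discretize W Q x y| ≤ M :=
          abs_sub_le_of_nonneg_of_le hWxy.1 hWxy.2 hW'.1 hW'.2
      _ ≤ 2 * θ * h + M * (N.indicator 1 x + N.indicator 1 y) := by
          linarith [mul_le_mul_of_nonneg_left hind hW.bound_nonneg,
            mul_nonneg (mul_nonneg zero_le_two hLip.nonneg) (Q.pos_of_forall_sub_le hmesh).le]
  · rw [not_or] at hbad
    rw [indicator_of_notMem hbad.1, indicator_of_notMem hbad.2, add_zero, mul_zero, add_zero]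
    exact abs_sub_discretize_le_of_notMem hW hLip hmesh hx hy hbad.1 hbad.2

lemma integral_rowDist_discretize_le (hW : IsRowStochastic M W)
    (hLip : IsPiecewiseLipschitz I θ W) (hmesh : ∀ j < J, Q.a (j + 1) - Q.a j ≤ h) :
    ∫ x in 𝕀, rowDist W (discretize W Q) x ≤ (2 * θ + 4 * (K + 1) * M) * h := by
  set N := I.breakpointNbhd h
  have hN := I.measurableSet_breakpointNbhd h
  have hh := (Q.pos_of_forall_sub_le hmesh).le
  set ν := (volume.restrict 𝕀).real N
  have hν : ν ≤ 2 * (K + 1) * h :=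
    (measureReal_restrict_apply hN).trans_le
      ((measureReal_mono inter_subset_left (I.volume_breakpointNbhd_ne_top h)).trans
        (I.volume_real_breakpointNbhd_le hh))
  have hind : Integrable (N.indicator 1) (volume.restrict 𝕀) :=
    (integrable_const (1 : ℝ)).indicator hN
  have hint : ∀ c, Integrable (fun y => c + M * N.indicator 1 y) (volume.restrict 𝕀) :=
    fun c => (integrable_const c).add (hind.const_mul M)
  have hcalc : ∀ c, ∫ y in 𝕀, (c + M * N.indicator 1 y) = c + M * ν := fun c => by
    rw [integral_add (integrable_const c) (hind.const_mul M), integral_const_mul,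
      integral_indicator_one hN, integral_const, measureReal_restrict_apply_univ,
      Real.volume_real_Icc_of_le zero_le_one, sub_zero, one_smul]
  have hrow : ∀ x ∈ 𝕀, rowDist W (discretize W Q) x ≤ 2 * θ * h + M * ν + M * N.indicator 1 x :=
    fun x hx => calc
      rowDist W (discretize W Q) x ≤
          ∫ y in 𝕀, ((2 * θ * h + M * N.indicator 1 x) + M * N.indicator 1 y) :=
        integral_mono_of_nonneg (ae_of_all _ fun _ => abs_nonneg _) (hint _)
          (ae_restrict_of_forall_mem measurableSet_Icc fun y hy => by
            linarith [abs_sub_discretize_le hW hLip hmesh hx hy])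
      _ = 2 * θ * h + M * ν + M * N.indicator 1 x := by rw [hcalc]; ring
  calc ∫ x in 𝕀, rowDist W (discretize W Q) x
      ≤ ∫ x in 𝕀, ((2 * θ * h + M * ν) + M * N.indicator 1 x) :=
        integral_mono_of_nonneg (ae_of_all _ fun x => rowDist_nonneg _ _ x) (hint _)
          (ae_restrict_of_forall_mem measurableSet_Icc hrow)
    _ = 2 * θ * h + 2 * M * ν := by rw [hcalc]; ring
    _ ≤ (2 * θ + 4 * (K + 1) * M) * h := by nlinarith [hW.bound_nonneg]

end Lipschitz

lemma mul_one_div_le_of_ceil_div_lt {C η : ℝ} (hη : 0 < η) {n : ℕ} (hn : ⌈C / η⌉₊ < n) :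
    C * (1 / n) ≤ η := by
  have hn0 : (0 : ℝ) < n := by exact_mod_cast (Nat.zero_le _).trans_lt hn
  rw [mul_one_div, div_le_iff₀ hn0, ← div_le_iff₀' hη]
  exact (Nat.le_ceil _).trans (by exact_mod_cast hn.le)

theorem stmt_7 (M θ η : ℝ) {K : ℕ} (hη : 0 < η) (W : ℝ → ℝ → ℝ)
    (I : IntervalPartition K)
    (hWmeas : Measurable (Function.uncurry W))
    (hWbdd : ∀ x ∈ Icc (0:ℝ) 1, ∀ y ∈ Icc (0:ℝ) 1, W x y ∈ Icc (0:ℝ) M)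
    (hWrow : ∀ x ∈ Icc (0:ℝ) 1, (∫ y in Icc (0:ℝ) 1, W x y) = 1)
    (hLip : ∀ k₁ k₂ : Fin K, ∀ x ∈ I.cell k₁, ∀ x' ∈ I.cell k₁,
      ∀ y ∈ I.cell k₂, ∀ y' ∈ I.cell k₂,
        |W x y - W x' y'| ≤ θ * (|x - x'| + |y - y'|)) :
    ∃ n₀ : ℕ, 0 < n₀ ∧ ∀ n ≥ n₀, ∀ (J : ℕ) (Q : IntervalPartition J),
      (∀ i < J, Q.a (i + 1) - Q.a i ≤ 1 / n) →
      ∀ t : ℕ, 1 ≤ t → ∀ f₀ : ℝ → ℝ, Measurable f₀ →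
        (∀ x ∈ Icc (0:ℝ) 1, f₀ x ∈ Icc (-1:ℝ) 1) →
        L1norm (fun x => (Tk W)^[t] f₀ x - (Tk (discretize W Q))^[t] f₀ x) ≤
          min 2 (t * η) := by
  have hW : IsRowStochastic M W := ⟨hWmeas, hWbdd, hWrow⟩
  set C := (M + 1) * (2 * θ + 4 * (K + 1) * M)
  refine ⟨⌈C / η⌉₊ + 1, Nat.succ_pos _, fun n hn J Q hmesh t ht f₀ hf₀ hf₀b => ?_⟩
  have hf : IsOpinion f₀ := ⟨hf₀, fun x hx => abs_le.2 (hf₀b x hx)⟩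
  have hWQ := hW.discretize Q
  refine le_min (L1norm_sub_le_two (hW.opinion_iterate_Tk hf t) (hWQ.opinion_iterate_Tk hf t)) ?_
  obtain ⟨s, rfl⟩ : ∃ s, t = s + 1 := ⟨t - 1, by omega⟩
  have hCn := mul_one_div_le_of_ceil_div_lt hη hn
  set δ := ∫ x in 𝕀, rowDist W (discretize W Q) x
  have hδ : δ ≤ (2 * θ + 4 * (K + 1) * M) * (1 / n) :=
    integral_rowDist_discretize_le hW (hLip : IsPiecewiseLipschitz I θ W) hmesh
  have hδ0 : 0 ≤ δ :=
    setIntegral_nonneg measurableSet_Icc fun x _ => rowDist_nonneg W (discretize W Q) x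
  have hM := hW.bound_nonneg
  calc L1norm (fun x => (Tk W)^[s + 1] f₀ x - (Tk (discretize W Q))^[s + 1] f₀ x)
      ≤ (s * M + 1) * δ := L1norm_iterate_Tk_sub_le hW hWQ hf s
    _ ≤ (s + 1) * ((M + 1) * δ) := by nlinarith [mul_nonneg (Nat.cast_nonneg s : (0 : ℝ) ≤ s) hδ0]
    _ ≤ (s + 1) * ((M + 1) * ((2 * θ + 4 * (K + 1) * M) * (1 / n))) := by gcongr
    _ = (s + 1) * (C * (1 / n)) := by ring
    _ ≤ ((s + 1 : ℕ) : ℝ) * η := by push_cast; gcongr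
end

section
/- Let γ > 0 and let W : [0,1]² → [0,M] be a measurable row-stochastic DiKernel with W(x,y) ≥ γ for all x,y. Then for any initial opinion function f₀ : [0,1] → [-1,1], the oscillation of fₜ = Tᵗ(W)f₀ decreases geometrically: sup_x fₜ(x) − inf_x fₜ(x) ≤ (1 − γ)ᵗ (sup_x f₀(x) − inf_x f₀(x)). -/
open MeasureTheory Set

lemma integ_of_bdd {g : ℝ → ℝ} (hg : Measurable g) (B : ℝ)
    (hB : ∀ y ∈ Icc (0:ℝ) 1, |g y| ≤ B) :
    IntegrableOn g (Icc (0:ℝ) 1) := by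
  apply Integrable.mono' (integrable_const B) hg.aestronglyMeasurable
  filter_upwards [ae_restrict_mem measurableSet_Icc] with y hy using hB y hy

lemma vol_icc : (volume (Icc (0:ℝ) 1)).toReal = 1 := by
  simp [Real.volume_Icc]

lemma key_step (M γ : ℝ) (W : ℝ → ℝ → ℝ)
    (hγ : 0 < γ) (hγ1 : γ ≤ 1)
    (hWmeas : Measurable (Function.uncurry W))
    (hWbdd : ∀ x ∈ Icc (0:ℝ) 1, ∀ y ∈ Icc (0:ℝ) 1, W x y ∈ Icc (0:ℝ) M)
    (hmix : ∀ x ∈ Icc (0:ℝ) 1, ∀ y ∈ Icc (0:ℝ) 1, γ ≤ W x y)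
    (hWrow : ∀ x ∈ Icc (0:ℝ) 1, (∫ y in Icc (0:ℝ) 1, W x y) = 1)
    (f : ℝ → ℝ) (hf : Measurable f) (C : ℝ)
    (hC : ∀ x ∈ Icc (0:ℝ) 1, |f x| ≤ C) :
    Measurable (Tk W f) ∧ (∀ x ∈ Icc (0:ℝ) 1, |Tk W f x| ≤ C) ∧
    ((⨆ x : Icc (0:ℝ) 1, Tk W f x) - ⨅ x : Icc (0:ℝ) 1, Tk W f x) ≤
      (1 - γ) * ((⨆ x : Icc (0:ℝ) 1, f x) - ⨅ x : Icc (0:ℝ) 1, f x) := by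
  haveI : Nonempty (Icc (0:ℝ) 1) := ⟨⟨0, by norm_num⟩⟩
  have h01 : (0:ℝ) ∈ Icc (0:ℝ) 1 := by norm_num
  have hCnn : 0 ≤ C := le_trans (abs_nonneg _) (hC 0 h01)
  have hMnn : 0 ≤ M := le_trans (hWbdd 0 h01 0 h01).1 (hWbdd 0 h01 0 h01).2
  -- measurability of W x ·
  have hWx : ∀ x : ℝ, Measurable (fun y => W x y) :=
    fun x => hWmeas.comp measurable_prodMk_left
  -- integrabilities
  have hIf : IntegrableOn f (Icc (0:ℝ) 1) := integ_of_bdd hf C hC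
  have hIW : ∀ x ∈ Icc (0:ℝ) 1, IntegrableOn (fun y => W x y) (Icc (0:ℝ) 1) := by
    intro x hx
    refine integ_of_bdd (hWx x) M (fun y hy => ?_)
    rw [abs_of_nonneg (hWbdd x hx y hy).1]; exact (hWbdd x hx y hy).2
  have hI1 : ∀ x ∈ Icc (0:ℝ) 1, IntegrableOn (fun y => W x y * f y) (Icc (0:ℝ) 1) := by
    intro x hx
    refine integ_of_bdd ((hWx x).mul hf) (M * C) (fun y hy => ?_)
    rw [abs_mul]
    exact mul_le_mul (by rw [abs_of_nonneg (hWbdd x hx y hy).1]; exact (hWbdd x hx y hy).2)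
      (hC y hy) (abs_nonneg _) hMnn
  have hI2 : ∀ x ∈ Icc (0:ℝ) 1, IntegrableOn (fun y => (W x y - γ) * f y) (Icc (0:ℝ) 1) := by
    intro x hx
    refine integ_of_bdd (((hWx x).sub measurable_const).mul hf) ((M + γ) * C) (fun y hy => ?_)
    rw [abs_mul]
    refine mul_le_mul ?_ (hC y hy) (abs_nonneg _) (by linarith)
    have := (hWbdd x hx y hy).1
    have := (hWbdd x hx y hy).2
    rw [abs_le]; constructor <;> linarith
  have hI2' : ∀ x ∈ Icc (0:ℝ) 1, IntegrableOn (fun y => W x y - γ) (Icc (0:ℝ) 1) :=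
    fun x hx => (hIW x hx).sub (integrable_const γ)
  -- measurability of Tk W f
  have hmeasT : Measurable (Tk W f) := by
    have h : StronglyMeasurable (fun p : ℝ × ℝ => W p.1 p.2 * f p.2) :=
      (hWmeas.mul (hf.comp measurable_snd)).stronglyMeasurable
    exact (MeasureTheory.StronglyMeasurable.integral_prod_right' h).measurable
  -- value bounds for Tk W f
  have hbound : ∀ x ∈ Icc (0:ℝ) 1, |Tk W f x| ≤ C := by
    intro x hx
    have hup : Tk W f x ≤ C := by
      have h1 : Tk W f x ≤ ∫ y in Icc (0:ℝ) 1, W x y * C := by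
        refine setIntegral_mono_on (hI1 x hx) ((hIW x hx).mul_const C) measurableSet_Icc
          (fun y hy => mul_le_mul_of_nonneg_left (le_trans (le_abs_self _) (hC y hy))
            (hWbdd x hx y hy).1)
      rw [integral_mul_const, hWrow x hx, one_mul] at h1
      exact h1
    have hlo : -C ≤ Tk W f x := by
      have h1 : (∫ y in Icc (0:ℝ) 1, W x y * (-C)) ≤ Tk W f x := by
        refine setIntegral_mono_on ((hIW x hx).mul_const (-C)) (hI1 x hx) measurableSet_Icc
          (fun y hy => mul_le_mul_of_nonneg_left
            (neg_le_of_abs_le (hC y hy)) (hWbdd x hx y hy).1)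
      rw [integral_mul_const, hWrow x hx, one_mul] at h1
      exact h1
    rw [abs_le]; exact ⟨hlo, hup⟩
  refine ⟨hmeasT, hbound, ?_⟩
  -- sup and inf of f
  set S := ⨆ x : Icc (0:ℝ) 1, f x with hS
  set I := ⨅ x : Icc (0:ℝ) 1, f x with hIdef
  have hbddA : BddAbove (range fun x : Icc (0:ℝ) 1 => f x) := by
    refine ⟨C, ?_⟩; rintro _ ⟨x, rfl⟩; exact le_trans (le_abs_self _) (hC x x.2)
  have hbddB : BddBelow (range fun x : Icc (0:ℝ) 1 => f x) := by
    refine ⟨-C, ?_⟩; rintro _ ⟨x, rfl⟩; exact neg_le_of_abs_le (hC x x.2)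
  have hleS : ∀ y ∈ Icc (0:ℝ) 1, f y ≤ S := fun y hy => le_ciSup hbddA ⟨y, hy⟩
  have hIle : ∀ y ∈ Icc (0:ℝ) 1, I ≤ f y := fun y hy => ciInf_le hbddB ⟨y, hy⟩
  have hSI : I ≤ S := le_trans (hIle 0 h01) (hleS 0 h01)
  -- decomposition value of ∫ (W x y - γ)
  have hrowγ : ∀ x ∈ Icc (0:ℝ) 1, (∫ y in Icc (0:ℝ) 1, (W x y - γ)) = 1 - γ := by
    intro x hx
    rw [integral_sub (hIW x hx) (integrable_const γ), hWrow x hx, setIntegral_const,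
      smul_eq_mul, measureReal_def, vol_icc, one_mul]
  -- split Tk
  have hsplit : ∀ x ∈ Icc (0:ℝ) 1,
      Tk W f x = (∫ y in Icc (0:ℝ) 1, (W x y - γ) * f y) + γ * ∫ y in Icc (0:ℝ) 1, f y := by
    intro x hx
    have heq : ∀ y : ℝ, W x y * f y = (W x y - γ) * f y + γ * f y := fun y => by ring
    rw [show Tk W f x = ∫ y in Icc (0:ℝ) 1, ((W x y - γ) * f y + γ * f y) by
        unfold Tk; exact integral_congr_ae (Filter.Eventually.of_forall (fun y => heq y)),
      integral_add (hI2 x hx) (hIf.const_mul γ), integral_const_mul]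
  -- upper and lower bounds on the first piece
  have hupper : ∀ x ∈ Icc (0:ℝ) 1,
      (∫ y in Icc (0:ℝ) 1, (W x y - γ) * f y) ≤ (1 - γ) * S := by
    intro x hx
    have h1 : (∫ y in Icc (0:ℝ) 1, (W x y - γ) * f y) ≤ ∫ y in Icc (0:ℝ) 1, (W x y - γ) * S := by
      refine setIntegral_mono_on (hI2 x hx) ((hI2' x hx).mul_const S) measurableSet_Icc
        (fun y hy => mul_le_mul_of_nonneg_left (hleS y hy) (by linarith [hmix x hx y hy]))
    rw [integral_mul_const, hrowγ x hx] at h1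
    exact h1
  have hlower : ∀ x ∈ Icc (0:ℝ) 1,
      (1 - γ) * I ≤ (∫ y in Icc (0:ℝ) 1, (W x y - γ) * f y) := by
    intro x hx
    have h1 : (∫ y in Icc (0:ℝ) 1, (W x y - γ) * I) ≤ ∫ y in Icc (0:ℝ) 1, (W x y - γ) * f y := by
      refine setIntegral_mono_on ((hI2' x hx).mul_const I) (hI2 x hx) measurableSet_Icc
        (fun y hy => mul_le_mul_of_nonneg_left (hIle y hy) (by linarith [hmix x hx y hy]))
    rw [integral_mul_const, hrowγ x hx] at h1
    exact h1
  -- pointwise oscillation bound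
  have hpt : ∀ x ∈ Icc (0:ℝ) 1, ∀ x' ∈ Icc (0:ℝ) 1,
      Tk W f x - Tk W f x' ≤ (1 - γ) * (S - I) := by
    intro x hx x' hx'
    rw [hsplit x hx, hsplit x' hx']
    have := hupper x hx
    have := hlower x' hx'
    nlinarith
  -- conclude
  have hfinal : (⨆ x : Icc (0:ℝ) 1, Tk W f x) ≤
      (⨅ x : Icc (0:ℝ) 1, Tk W f x) + (1 - γ) * (S - I) := by
    refine ciSup_le (fun x => ?_)
    have h2 : Tk W f x - (1 - γ) * (S - I) ≤ ⨅ x' : Icc (0:ℝ) 1, Tk W f x' :=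
      le_ciInf (fun x' => by linarith [hpt x x.2 x' x'.2])
    linarith
  linarith

theorem stmt_12 (M γ : ℝ) (W : ℝ → ℝ → ℝ) (f₀ : ℝ → ℝ) (t : ℕ)
    (hγ : 0 < γ)
    (hWmeas : Measurable (Function.uncurry W))
    (hWbdd : ∀ x ∈ Icc (0:ℝ) 1, ∀ y ∈ Icc (0:ℝ) 1, W x y ∈ Icc (0:ℝ) M)
    (hmix : ∀ x ∈ Icc (0:ℝ) 1, ∀ y ∈ Icc (0:ℝ) 1, γ ≤ W x y)
    (hWrow : ∀ x ∈ Icc (0:ℝ) 1, (∫ y in Icc (0:ℝ) 1, W x y) = 1)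
    (hfmeas : Measurable f₀)
    (hfbdd : ∀ x ∈ Icc (0:ℝ) 1, f₀ x ∈ Icc (-1:ℝ) 1) :
    (⨆ x : Icc (0:ℝ) 1, (Tk W)^[t] f₀ x) - (⨅ x : Icc (0:ℝ) 1, (Tk W)^[t] f₀ x) ≤
      (1 - γ) ^ t * ((⨆ x : Icc (0:ℝ) 1, f₀ x) - ⨅ x : Icc (0:ℝ) 1, f₀ x) := by
  haveI : Nonempty (Icc (0:ℝ) 1) := ⟨⟨0, by norm_num⟩⟩
  have h01 : (0:ℝ) ∈ Icc (0:ℝ) 1 := by norm_num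
  have hMnn : 0 ≤ M := le_trans (hWbdd 0 h01 0 h01).1 (hWbdd 0 h01 0 h01).2
  -- γ ≤ 1
  have hγ1 : γ ≤ 1 := by
    have hIW : IntegrableOn (fun y => W 0 y) (Icc (0:ℝ) 1) := by
      refine integ_of_bdd (hWmeas.comp measurable_prodMk_left) M (fun y hy => ?_)
      rw [abs_of_nonneg (hWbdd 0 h01 y hy).1]; exact (hWbdd 0 h01 y hy).2
    have h1 : (∫ y in Icc (0:ℝ) 1, γ) ≤ ∫ y in Icc (0:ℝ) 1, W 0 y :=
      setIntegral_mono_on (integrable_const γ) hIW measurableSet_Icc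
        (fun y hy => hmix 0 h01 y hy)
    rw [setIntegral_const, smul_eq_mul, measureReal_def, vol_icc, one_mul, hWrow 0 h01] at h1
    exact h1
  have h1γ : 0 ≤ 1 - γ := by linarith
  have main : ∀ n : ℕ, Measurable ((Tk W)^[n] f₀) ∧
      (∀ x ∈ Icc (0:ℝ) 1, |(Tk W)^[n] f₀ x| ≤ 1) ∧
      (⨆ x : Icc (0:ℝ) 1, (Tk W)^[n] f₀ x) - (⨅ x : Icc (0:ℝ) 1, (Tk W)^[n] f₀ x) ≤
        (1 - γ) ^ n * ((⨆ x : Icc (0:ℝ) 1, f₀ x) - ⨅ x : Icc (0:ℝ) 1, f₀ x) := by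
    intro n
    induction n with
    | zero =>
      refine ⟨by simpa using hfmeas, fun x hx => ?_, ?_⟩
      · simp only [Function.iterate_zero, id_eq]
        exact abs_le.2 ⟨(hfbdd x hx).1, (hfbdd x hx).2⟩
      · simp
    | succ n ih =>
      obtain ⟨hm, hb, ho⟩ := ih
      obtain ⟨hm', hb', ho'⟩ := key_step M γ W hγ hγ1 hWmeas hWbdd hmix hWrow _ hm 1 hb
      simp only [Function.iterate_succ_apply']
      refine ⟨hm', hb', ?_⟩
      calc (⨆ x : Icc (0:ℝ) 1, Tk W ((Tk W)^[n] f₀) x) -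
            (⨅ x : Icc (0:ℝ) 1, Tk W ((Tk W)^[n] f₀) x)
          ≤ (1 - γ) * ((⨆ x : Icc (0:ℝ) 1, (Tk W)^[n] f₀ x) -
            ⨅ x : Icc (0:ℝ) 1, (Tk W)^[n] f₀ x) := ho'
        _ ≤ (1 - γ) * ((1 - γ) ^ n *
            ((⨆ x : Icc (0:ℝ) 1, f₀ x) - ⨅ x : Icc (0:ℝ) 1, f₀ x)) :=
            mul_le_mul_of_nonneg_left ho h1γ
        _ = (1 - γ) ^ (n + 1) * ((⨆ x : Icc (0:ℝ) 1, f₀ x) - ⨅ x : Icc (0:ℝ) 1, f₀ x) := by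
            ring
  exact (main t).2.2
end

section
/- Let γ > 0 and let W be a row-stochastic DiKernel with W(x,y) ≥ γ for all x,y ∈ [0,1]. Then there exists a measurable function h : [0,1] → ℝ₊ with ∫₀¹ h(y)dy = 1 and constants α ≥ 0, ρ ∈ [0,1) such that for every initial opinion f₀ : [0,1] → [-1,1], setting f* = ∫₀¹ h(y)f₀(y)dy, one has sup_{x∈[0,1]} |fₜ(x) − f*| ≤ αρᵗ for all t, where fₜ = Tᵗ(W)f₀. In particular the opinions converge uniformly to the constant consensus f*. -/
open MeasureTheory Set

/-! Doeblin's minorization `W ≥ γ` makes the Markov operator `T` contract oscillations: if `f`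
takes its values on `S` in an interval of length `L`, then `T f` takes its values in a
subinterval of length `(1 - γ) L`. Hence `Tᵗ f` converges uniformly on `S`, at rate `(1 - γ)ᵗ`,
to a constant `c f`. The stationary density is the pointwise limit of `hₜ = (T*)ᵗ 1`: by duality
`hₜ₊₁ y = ∫ Tᵗ W(·, y)`, which converges at the same rate to `c W(·, y)`, and dominated
convergence in `∫ hₜ f = ∫ Tᵗ f` identifies `c f` with `∫ h f`. -/

open Filter Topology Function

variable {α : Type*} [MeasurableSpace α]

noncomputable def markovOp (μ : Measure α) (W : α → α → ℝ) (f : α → ℝ) : α → ℝ :=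
  fun x => ∫ y, W x y * f y ∂μ

noncomputable def adjointOp (μ : Measure α) (W : α → α → ℝ) (g : α → ℝ) : α → ℝ :=
  fun y => ∫ x, g x * W x y ∂μ

structure IsStochasticKernel (μ : Measure α) (S : Set α) (W : α → α → ℝ) (M : ℝ) : Prop where
  measurable : Measurable (uncurry W)
  ae_mem : ∀ᵐ x ∂μ, x ∈ S
  mem_Icc : ∀ x ∈ S, ∀ y ∈ S, W x y ∈ Icc 0 M
  integral_eq_one : ∀ x ∈ S, ∫ y, W x y ∂μ = 1

section Measurability

variable {μ : Measure α} [SFinite μ] {W : α → α → ℝ}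

theorem measurable_markovOp (hW : Measurable (uncurry W)) {f : α → ℝ} (hf : Measurable f) :
    Measurable (markovOp μ W f) :=
  (hW.mul (hf.comp measurable_snd)).stronglyMeasurable.integral_prod_right.measurable

theorem measurable_iterate_markovOp (hW : Measurable (uncurry W)) {f : α → ℝ} (hf : Measurable f)
    (t : ℕ) : Measurable ((markovOp μ W)^[t] f) := by
  induction t with
  | zero => exact hf
  | succ t ih => rw [iterate_succ_apply']; exact measurable_markovOp hW ih

theorem measurable_adjointOp (hW : Measurable (uncurry W)) {g : α → ℝ} (hg : Measurable g) :
    Measurable (adjointOp μ W g) :=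
  ((hg.comp measurable_snd).mul (hW.comp measurable_swap)).stronglyMeasurable
    |>.integral_prod_right.measurable

end Measurability

section BoundedOnFullMeasure

variable {μ : Measure α} {S : Set α} {f : α → ℝ} {a b : ℝ}

theorem ae_norm_le_of_mapsTo_Icc (hS : ∀ᵐ x ∂μ, x ∈ S) (hfS : MapsTo f S (Icc a b)) :
    ∀ᵐ x ∂μ, ‖f x‖ ≤ max |a| |b| :=
  hS.mono fun _ hx => abs_le_max_abs_abs (hfS hx).1 (hfS hx).2

variable [IsProbabilityMeasure μ]

theorem integrable_of_mapsTo_Icc (hS : ∀ᵐ x ∂μ, x ∈ S) (hf : AEStronglyMeasurable f μ)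
    (hfS : MapsTo f S (Icc a b)) : Integrable f μ :=
  .of_bound hf _ (ae_norm_le_of_mapsTo_Icc hS hfS)

theorem integral_mem_Icc_of_mapsTo (hS : ∀ᵐ x ∂μ, x ∈ S) (hf : AEStronglyMeasurable f μ)
    (hfS : MapsTo f S (Icc a b)) : ∫ x, f x ∂μ ∈ Icc a b := by
  have hf_int := integrable_of_mapsTo_Icc hS hf hfS
  constructor
  · simpa using integral_mono_ae (integrable_const a) hf_int (hS.mono fun x hx => (hfS hx).1)
  · simpa using integral_mono_ae hf_int (integrable_const b) (hS.mono fun x hx => (hfS hx).2)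

end BoundedOnFullMeasure

namespace IsStochasticKernel

variable {μ : Measure α} {S : Set α} {W : α → α → ℝ} {M γ : ℝ}

theorem mapsTo_left (hW : IsStochasticKernel μ S W M) {x : α} (hx : x ∈ S) :
    MapsTo (W x) S (Icc 0 M) :=
  fun y hy => hW.mem_Icc x hx y hy

theorem mapsTo_right (hW : IsStochasticKernel μ S W M) {y : α} (hy : y ∈ S) :
    MapsTo (fun x => W x y) S (Icc 0 M) :=
  fun x hx => hW.mem_Icc x hx y hy

variable [IsProbabilityMeasure μ]

theorem integrable_left (hW : IsStochasticKernel μ S W M) {x : α} (hx : x ∈ S) :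
    Integrable (W x) μ :=
  integrable_of_mapsTo_Icc hW.ae_mem hW.measurable.of_uncurry_left.aestronglyMeasurable
    (hW.mapsTo_left hx)

theorem le_one_of_forall_le (hW : IsStochasticKernel μ S W M) (hmix : ∀ x ∈ S, ∀ y ∈ S, γ ≤ W x y) :
    γ ≤ 1 := by
  obtain ⟨x, hx⟩ := hW.ae_mem.exists
  rw [← hW.integral_eq_one x hx]
  exact (integral_mem_Icc_of_mapsTo hW.ae_mem hW.measurable.of_uncurry_left.aestronglyMeasurable
    (b := M) fun y hy => ⟨hmix x hx y hy, (hW.mem_Icc x hx y hy).2⟩).1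

/-- The minorization `W ≥ γ` splits off `γ ∫ f`; the remaining kernel `W - γ` is nonnegative
with mass `1 - γ`. -/
theorem markovOp_mem_Icc (hW : IsStochasticKernel μ S W M)
    (hmix : ∀ x ∈ S, ∀ y ∈ S, γ ≤ W x y) {f : α → ℝ} (hf : Measurable f) {a b : ℝ}
    (hfS : MapsTo f S (Icc a b)) {x : α} (hx : x ∈ S) :
    markovOp μ W f x ∈
      Icc (γ * ∫ y, f y ∂μ + (1 - γ) * a) (γ * ∫ y, f y ∂μ + (1 - γ) * b) := by
  have hWx : Integrable (fun y => W x y - γ) μ := (hW.integrable_left hx).sub (integrable_const γ)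
  have hmass : ∫ y, (W x y - γ) ∂μ = 1 - γ := by
    rw [integral_sub (hW.integrable_left hx) (integrable_const γ), hW.integral_eq_one x hx,
      integral_const, probReal_univ, one_smul]
  have hWf : Integrable (fun y => (W x y - γ) * f y) μ :=
    hWx.mul_bdd hf.aestronglyMeasurable (ae_norm_le_of_mapsTo_Icc hW.ae_mem hfS)
  have hsplit : markovOp μ W f x = ∫ y, (W x y - γ) * f y ∂μ + γ * ∫ y, f y ∂μ := by
    rw [← integral_const_mul, ← integral_add hWf
      ((integrable_of_mapsTo_Icc hW.ae_mem hf.aestronglyMeasurable hfS).const_mul γ)]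
    simp only [markovOp, sub_mul, sub_add_cancel]
  rw [hsplit]
  constructor
  · have := integral_mono_ae (hWx.mul_const a) hWf <| hW.ae_mem.mono fun y hy =>
      mul_le_mul_of_nonneg_left (hfS hy).1 (sub_nonneg.2 (hmix x hx y hy))
    rw [integral_mul_const, hmass] at this
    linarith
  · have := integral_mono_ae hWf (hWx.mul_const b) <| hW.ae_mem.mono fun y hy =>
      mul_le_mul_of_nonneg_left (hfS hy).2 (sub_nonneg.2 (hmix x hx y hy))
    rw [integral_mul_const, hmass] at this
    linarith

theorem markovOp_mapsTo_Icc (hW : IsStochasticKernel μ S W M) {f : α → ℝ}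
    (hf : Measurable f) {a b : ℝ} (hfS : MapsTo f S (Icc a b)) :
    MapsTo (markovOp μ W f) S (Icc a b) := fun x hx => by
  simpa using hW.markovOp_mem_Icc (fun x hx y hy => (hW.mem_Icc x hx y hy).1) hf hfS hx

theorem iterate_markovOp_mapsTo_Icc (hW : IsStochasticKernel μ S W M) {f : α → ℝ}
    (hf : Measurable f) {a b : ℝ} (hfS : MapsTo f S (Icc a b)) (t : ℕ) :
    MapsTo ((markovOp μ W)^[t] f) S (Icc a b) := by
  induction t with
  | zero => exact hfS
  | succ t ih =>
    rw [iterate_succ_apply']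
    exact hW.markovOp_mapsTo_Icc (measurable_iterate_markovOp hW.measurable hf t) ih

theorem exists_iterate_mapsTo_Icc (hW : IsStochasticKernel μ S W M)
    (hmix : ∀ x ∈ S, ∀ y ∈ S, γ ≤ W x y) {f : α → ℝ} (hf : Measurable f) {a b : ℝ}
    (hfS : MapsTo f S (Icc a b)) (t : ℕ) :
    ∃ m, MapsTo ((markovOp μ W)^[t] f) S (Icc m (m + (1 - γ) ^ t * (b - a))) := by
  induction t generalizing f a b with
  | zero => exact ⟨a, by simpa using hfS⟩
  | succ t ih =>
    obtain ⟨m, hm⟩ := ih (measurable_markovOp hW.measurable hf)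
      (fun x hx => hW.markovOp_mem_Icc hmix hf hfS hx)
    refine ⟨m, ?_⟩
    rw [iterate_succ_apply]
    convert hm using 3
    ring

theorem abs_iterate_add_sub_iterate_le (hW : IsStochasticKernel μ S W M)
    (hmix : ∀ x ∈ S, ∀ y ∈ S, γ ≤ W x y) {f : α → ℝ} (hf : Measurable f) {a b : ℝ}
    (hfS : MapsTo f S (Icc a b)) (k t : ℕ) {x x' : α} (hx : x ∈ S) (hx' : x' ∈ S) :
    |(markovOp μ W)^[k + t] f x - (markovOp μ W)^[t] f x'| ≤ (1 - γ) ^ t * (b - a) := by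
  obtain ⟨m, hm⟩ := hW.exists_iterate_mapsTo_Icc hmix hf hfS t
  have hlate := hW.iterate_markovOp_mapsTo_Icc (measurable_iterate_markovOp hW.measurable hf t) hm k
  rw [← iterate_add_apply] at hlate
  obtain ⟨h₁, h₂⟩ := hlate hx
  obtain ⟨h₃, h₄⟩ := hm hx'
  exact abs_sub_le_iff.2 ⟨by linarith, by linarith⟩

theorem exists_consensus (hW : IsStochasticKernel μ S W M) (hγ : 0 < γ)
    (hmix : ∀ x ∈ S, ∀ y ∈ S, γ ≤ W x y) {f : α → ℝ} (hf : Measurable f) {a b : ℝ}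
    (hfS : MapsTo f S (Icc a b)) :
    ∃ c, ∀ t, ∀ x ∈ S, |(markovOp μ W)^[t] f x - c| ≤ (1 - γ) ^ t * (b - a) := by
  obtain ⟨x₀, hx₀⟩ := hW.ae_mem.exists
  set u : ℕ → ℝ := fun t => (markovOp μ W)^[t] f x₀
  have hu : CauchySeq u := cauchySeq_of_le_geometric (1 - γ) (b - a) (sub_lt_self 1 hγ) fun t => by
    rw [Real.dist_eq, abs_sub_comm, add_comm, mul_comm]
    exact hW.abs_iterate_add_sub_iterate_le hmix hf hfS 1 t hx₀ hx₀
  obtain ⟨c, hc⟩ := cauchySeq_tendsto_of_complete hu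
  refine ⟨c, fun t x hx => ?_⟩
  have hlim : Tendsto (fun k => |u (k + t) - (markovOp μ W)^[t] f x|) atTop
      (𝓝 |c - (markovOp μ W)^[t] f x|) :=
    ((hc.comp (tendsto_add_atTop_nat t)).sub_const _).abs
  rw [abs_sub_comm]
  exact le_of_tendsto' hlim fun k => hW.abs_iterate_add_sub_iterate_le hmix hf hfS k t hx₀ hx

theorem abs_adjointOp_le (hW : IsStochasticKernel μ S W M) {g : α → ℝ} {C : ℝ}
    (hg : ∀ x ∈ S, |g x| ≤ C) {y : α} (hy : y ∈ S) : |adjointOp μ W g y| ≤ C * M := by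
  have := norm_integral_le_of_norm_le_const (μ := μ) (f := fun x => g x * W x y) (C := C * M) <|
    hW.ae_mem.mono fun x hx => by
      rw [Real.norm_eq_abs, abs_mul, abs_of_nonneg (hW.mem_Icc x hx y hy).1]
      exact mul_le_mul (hg x hx) (hW.mem_Icc x hx y hy).2 (hW.mem_Icc x hx y hy).1
        ((abs_nonneg _).trans (hg x hx))
  rwa [probReal_univ, mul_one] at this

theorem integral_adjointOp_mul (hW : IsStochasticKernel μ S W M) {g f : α → ℝ}
    (hg : Measurable g) {C : ℝ} (hgC : ∀ x ∈ S, |g x| ≤ C) (hf : Measurable f) {a b : ℝ}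
    (hfS : MapsTo f S (Icc a b)) :
    ∫ y, adjointOp μ W g y * f y ∂μ = ∫ x, g x * markovOp μ W f x ∂μ := by
  have hprod : ∀ᵐ p ∂μ.prod μ, p.1 ∈ S ∧ p.2 ∈ S :=
    (Measure.quasiMeasurePreserving_fst.ae hW.ae_mem).and
      (Measure.quasiMeasurePreserving_snd.ae hW.ae_mem)
  have hint : Integrable (uncurry fun x y => g x * W x y * f y) (μ.prod μ) := by
    refine .of_bound ((hg.comp measurable_fst).mul hW.measurable |>.mul
      (hf.comp measurable_snd)).aestronglyMeasurable (C * M * max |a| |b|) ?_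
    filter_upwards [hprod] with ⟨x, y⟩ ⟨hx, hy⟩
    simp only [uncurry_apply_pair, Real.norm_eq_abs, abs_mul]
    have hC : 0 ≤ C := (abs_nonneg _).trans (hgC x hx)
    have hW' := hW.mem_Icc x hx y hy
    rw [abs_of_nonneg hW'.1]
    exact mul_le_mul (mul_le_mul (hgC x hx) hW'.2 hW'.1 hC)
      (abs_le_max_abs_abs (hfS hy).1 (hfS hy).2) (abs_nonneg _) (mul_nonneg hC (hW'.1.trans hW'.2))
  calc ∫ y, adjointOp μ W g y * f y ∂μ = ∫ y, ∫ x, g x * W x y * f y ∂μ ∂μ := by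
        simp only [adjointOp, ← integral_mul_const]
    _ = ∫ x, ∫ y, g x * W x y * f y ∂μ ∂μ := (integral_integral_swap hint).symm
    _ = ∫ x, g x * markovOp μ W f x ∂μ := by
        simp only [markovOp, ← integral_const_mul, mul_assoc]

end IsStochasticKernel

noncomputable def densityApprox (μ : Measure α) (W : α → α → ℝ) (t : ℕ) : α → ℝ :=
  (adjointOp μ W)^[t] 1

theorem densityApprox_succ (μ : Measure α) (W : α → α → ℝ) (t : ℕ) :
    densityApprox μ W (t + 1) = adjointOp μ W (densityApprox μ W t) :=
  iterate_succ_apply' _ _ _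

theorem measurable_densityApprox {μ : Measure α} [SFinite μ] {W : α → α → ℝ}
    (hW : Measurable (uncurry W)) (t : ℕ) : Measurable (densityApprox μ W t) := by
  induction t with
  | zero => exact measurable_const
  | succ t ih => rw [densityApprox_succ]; exact measurable_adjointOp hW ih

noncomputable def stationaryDensity (μ : Measure α) (W : α → α → ℝ) : α → ℝ :=
  fun y => limUnder atTop fun t => densityApprox μ W t y

theorem measurable_stationaryDensity {μ : Measure α} [SFinite μ] {W : α → α → ℝ}
    (hW : Measurable (uncurry W)) : Measurable (stationaryDensity μ W) :=
  (StronglyMeasurable.limUnder fun t =>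
    (measurable_densityApprox hW t).stronglyMeasurable).measurable

theorem tendsto_of_abs_sub_le_geometric {u : ℕ → ℝ} {c r C : ℝ} (hr₀ : 0 ≤ r) (hr₁ : r < 1)
    (hu : ∀ t, |u t - c| ≤ r ^ t * C) : Tendsto u atTop (𝓝 c) := by
  refine tendsto_iff_dist_tendsto_zero.2 <| squeeze_zero (fun _ => dist_nonneg) hu ?_
  simpa using (tendsto_pow_atTop_nhds_zero_of_lt_one hr₀ hr₁).mul_const C

namespace IsStochasticKernel

variable {μ : Measure α} [IsProbabilityMeasure μ] {S : Set α} {W : α → α → ℝ} {M γ : ℝ}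

theorem abs_densityApprox_le (hW : IsStochasticKernel μ S W M) (t : ℕ) {y : α} (hy : y ∈ S) :
    |densityApprox μ W t y| ≤ M ^ t := by
  induction t generalizing y with
  | zero => simp [densityApprox]
  | succ t ih => rw [densityApprox_succ, pow_succ]; exact hW.abs_adjointOp_le (fun x hx => ih hx) hy

theorem integral_densityApprox_mul (hW : IsStochasticKernel μ S W M) (t : ℕ) {f : α → ℝ}
    (hf : Measurable f) {a b : ℝ} (hfS : MapsTo f S (Icc a b)) :
    ∫ y, densityApprox μ W t y * f y ∂μ = ∫ x, (markovOp μ W)^[t] f x ∂μ := by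
  induction t generalizing f a b with
  | zero => simp [densityApprox]
  | succ t ih =>
    rw [densityApprox_succ, hW.integral_adjointOp_mul (measurable_densityApprox hW.measurable t)
      (fun x hx => hW.abs_densityApprox_le t hx) hf hfS,
      ih (measurable_markovOp hW.measurable hf) (hW.markovOp_mapsTo_Icc hf hfS), iterate_succ_apply]

theorem densityApprox_succ_eq_integral (hW : IsStochasticKernel μ S W M) (t : ℕ) {y : α}
    (hy : y ∈ S) :
    densityApprox μ W (t + 1) y = ∫ x, (markovOp μ W)^[t] (fun x => W x y) x ∂μ := by
  rw [densityApprox_succ]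
  exact hW.integral_densityApprox_mul t hW.measurable.of_uncurry_right (hW.mapsTo_right hy)

theorem densityApprox_succ_mem_Icc (hW : IsStochasticKernel μ S W M) (t : ℕ) {y : α}
    (hy : y ∈ S) : densityApprox μ W (t + 1) y ∈ Icc 0 M := by
  rw [hW.densityApprox_succ_eq_integral t hy]
  have hcol : Measurable ((markovOp μ W)^[t] fun x => W x y) :=
    measurable_iterate_markovOp hW.measurable hW.measurable.of_uncurry_right t
  exact integral_mem_Icc_of_mapsTo hW.ae_mem hcol.aestronglyMeasurable
    (hW.iterate_markovOp_mapsTo_Icc hW.measurable.of_uncurry_right (hW.mapsTo_right hy) t)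

theorem abs_integral_sub_le (hW : IsStochasticKernel μ S W M) {f : α → ℝ}
    (hf : AEStronglyMeasurable f μ) {c δ : ℝ} (hfc : ∀ x ∈ S, |f x - c| ≤ δ) :
    |∫ x, f x ∂μ - c| ≤ δ := by
  obtain ⟨h₁, h₂⟩ := integral_mem_Icc_of_mapsTo hW.ae_mem hf (a := c - δ) (b := c + δ)
    fun x hx => by constructor <;> linarith [abs_le.1 (hfc x hx)]
  exact abs_le.2 ⟨by linarith, by linarith⟩

theorem tendsto_stationaryDensity (hW : IsStochasticKernel μ S W M) (hγ : 0 < γ)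
    (hmix : ∀ x ∈ S, ∀ y ∈ S, γ ≤ W x y) {y : α} (hy : y ∈ S) :
    Tendsto (fun t => densityApprox μ W t y) atTop (𝓝 (stationaryDensity μ W y)) := by
  refine tendsto_nhds_limUnder ?_
  obtain ⟨c, hc⟩ :=
    hW.exists_consensus hγ hmix hW.measurable.of_uncurry_right (hW.mapsTo_right hy)
  refine ⟨c, (tendsto_add_atTop_iff_nat 1).1 <| tendsto_of_abs_sub_le_geometric (C := M - 0)
    (sub_nonneg.2 (hW.le_one_of_forall_le hmix)) (sub_lt_self 1 hγ) fun t => ?_⟩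
  rw [hW.densityApprox_succ_eq_integral t hy]
  have hcol : Measurable ((markovOp μ W)^[t] fun x => W x y) :=
    measurable_iterate_markovOp hW.measurable hW.measurable.of_uncurry_right t
  exact hW.abs_integral_sub_le hcol.aestronglyMeasurable (hc t)

theorem stationaryDensity_mem_Icc (hW : IsStochasticKernel μ S W M) (hγ : 0 < γ)
    (hmix : ∀ x ∈ S, ∀ y ∈ S, γ ≤ W x y) {y : α} (hy : y ∈ S) :
    stationaryDensity μ W y ∈ Icc 0 M :=
  isClosed_Icc.mem_of_tendsto
    ((tendsto_add_atTop_iff_nat 1).2 (hW.tendsto_stationaryDensity hγ hmix hy))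
    (Eventually.of_forall fun t => hW.densityApprox_succ_mem_Icc t hy)

theorem integral_stationaryDensity_mul (hW : IsStochasticKernel μ S W M) (hγ : 0 < γ)
    (hmix : ∀ x ∈ S, ∀ y ∈ S, γ ≤ W x y) {f : α → ℝ} (hf : Measurable f) {a b : ℝ}
    (hfS : MapsTo f S (Icc a b)) {c : ℝ}
    (hc : ∀ t, ∀ x ∈ S, |(markovOp μ W)^[t] f x - c| ≤ (1 - γ) ^ t * (b - a)) :
    ∫ y, stationaryDensity μ W y * f y ∂μ = c := by
  have hdensity : Tendsto (fun t => ∫ y, densityApprox μ W (t + 1) y * f y ∂μ) atTop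
      (𝓝 (∫ y, stationaryDensity μ W y * f y ∂μ)) := by
    refine tendsto_integral_of_dominated_convergence (fun _ => M * max |a| |b|)
      (fun t => ((measurable_densityApprox hW.measurable (t + 1)).mul hf).aestronglyMeasurable)
      (integrable_const _) (fun t => hW.ae_mem.mono fun y hy => ?_) (hW.ae_mem.mono fun y hy => ?_)
    · have hM := hW.densityApprox_succ_mem_Icc t hy
      rw [Real.norm_eq_abs, abs_mul, abs_of_nonneg hM.1]
      exact mul_le_mul hM.2 (abs_le_max_abs_abs (hfS hy).1 (hfS hy).2) (abs_nonneg _)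
        (hM.1.trans hM.2)
    · exact ((tendsto_add_atTop_iff_nat 1).2 (hW.tendsto_stationaryDensity hγ hmix hy)).mul_const _
  have hmean : Tendsto (fun t => ∫ y, densityApprox μ W (t + 1) y * f y ∂μ) atTop (𝓝 c) := by
    simp only [hW.integral_densityApprox_mul _ hf hfS]
    refine (tendsto_add_atTop_iff_nat 1).2 <| tendsto_of_abs_sub_le_geometric
      (sub_nonneg.2 (hW.le_one_of_forall_le hmix)) (sub_lt_self 1 hγ) fun t => hW.abs_integral_sub_le
        (measurable_iterate_markovOp hW.measurable hf t).aestronglyMeasurable (hc t)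
  exact tendsto_nhds_unique hdensity hmean

theorem abs_iterate_markovOp_sub_integral_le (hW : IsStochasticKernel μ S W M) (hγ : 0 < γ)
    (hmix : ∀ x ∈ S, ∀ y ∈ S, γ ≤ W x y) {f : α → ℝ} (hf : Measurable f) {a b : ℝ}
    (hfS : MapsTo f S (Icc a b)) (t : ℕ) {x : α} (hx : x ∈ S) :
    |(markovOp μ W)^[t] f x - ∫ y, stationaryDensity μ W y * f y ∂μ| ≤ (1 - γ) ^ t * (b - a) := by
  obtain ⟨c, hc⟩ := hW.exists_consensus hγ hmix hf hfS
  rw [hW.integral_stationaryDensity_mul hγ hmix hf hfS hc]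
  exact hc t x hx

theorem integral_stationaryDensity (hW : IsStochasticKernel μ S W M) (hγ : 0 < γ)
    (hmix : ∀ x ∈ S, ∀ y ∈ S, γ ≤ W x y) : ∫ y, stationaryDensity μ W y ∂μ = 1 := by
  obtain ⟨x, hx⟩ := hW.ae_mem.exists
  have := hW.abs_iterate_markovOp_sub_integral_le hγ hmix (f := 1) measurable_const
    (a := 1) (b := 1) (fun _ _ => ⟨le_rfl, le_rfl⟩) 0 hx
  simp only [iterate_zero_apply, Pi.one_apply, mul_one, sub_self, mul_zero, abs_nonpos_iff,
    sub_eq_zero] at this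
  exact this.symm

end IsStochasticKernel

theorem stmt_13 (M γ : ℝ) (W : ℝ → ℝ → ℝ)
    (hγ : 0 < γ)
    (hWmeas : Measurable (Function.uncurry W))
    (hWbdd : ∀ x ∈ Icc (0:ℝ) 1, ∀ y ∈ Icc (0:ℝ) 1, W x y ∈ Icc (0:ℝ) M)
    (hmix : ∀ x ∈ Icc (0:ℝ) 1, ∀ y ∈ Icc (0:ℝ) 1, γ ≤ W x y)
    (hWrow : ∀ x ∈ Icc (0:ℝ) 1, (∫ y in Icc (0:ℝ) 1, W x y) = 1) :
    ∃ (h : ℝ → ℝ) (α ρ : ℝ), Measurable h ∧ (∀ y ∈ Icc (0:ℝ) 1, 0 ≤ h y) ∧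
      (∫ y in Icc (0:ℝ) 1, h y) = 1 ∧ 0 ≤ α ∧ ρ ∈ Ico (0:ℝ) 1 ∧
      ∀ f₀ : ℝ → ℝ, Measurable f₀ → (∀ x ∈ Icc (0:ℝ) 1, f₀ x ∈ Icc (-1:ℝ) 1) →
        ∀ t : ℕ, ∀ x ∈ Icc (0:ℝ) 1,
          |(Tk W)^[t] f₀ x - ∫ y in Icc (0:ℝ) 1, h y * f₀ y| ≤ α * ρ ^ t := by
  have : IsProbabilityMeasure (volume.restrict (Icc (0:ℝ) 1)) := ⟨by simp⟩
  have hW : IsStochasticKernel (volume.restrict (Icc (0:ℝ) 1)) (Icc 0 1) W M :=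
    ⟨hWmeas, ae_restrict_mem measurableSet_Icc, hWbdd, hWrow⟩
  have hγ₁ := hW.le_one_of_forall_le hmix
  refine ⟨stationaryDensity _ W, 2, 1 - γ, measurable_stationaryDensity hWmeas,
    fun y hy => (hW.stationaryDensity_mem_Icc hγ hmix hy).1, hW.integral_stationaryDensity hγ hmix,
    zero_le_two, ⟨by linarith, by linarith⟩, fun f₀ hf₀ hf₀S t x hx => ?_⟩
  have := hW.abs_iterate_markovOp_sub_integral_le hγ hmix hf₀ hf₀S t hx
  rw [mul_comm]
  norm_num at this
  exact this
end
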